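/- (The pebble game with colors and slider-pinning.) Let H be the final configuration of any canonical (2,3)-pebble game construction. Replacing each pebble that lies on a vertex by a loop at that vertex, colored with the color of that pebble, yields a graph such that: every subgraph containing no loops is (2,3)-sparse; each of the two color classes of non-loop edges is a forest; and each maximal monochromatic tree contains exactly one loop of its color. In other words, the result is the graph of a minimally pinned axis-parallel bar-slider framework. -/

import Mathlib

open scoped Classical

namespace PebbleGame

/-- A configuration of the `(k,ℓ)`-pebble game with colors: a directed multigraph
whose edges are records `(tail, head, color)` (the color of an edge is the color of
the unique pebble lying on it), together with the multiset of colors of the pebbles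
sitting on each vertex. -/
structure PGConfig (V : Type) (k : ℕ) where
  edges : Multiset (V × V × Fin k)
  pebs : V → Multiset (Fin k)

variable {V : Type} [DecidableEq V] {k ℓ : ℕ}

/-- The configuration resulting from an add-edge move: a pebble of color `c` is picked
up from `v`, the directed edge `vw` is added and the pebble is placed on it. -/
def addEdgeCfg (H : PGConfig V k) (v w : V) (c : Fin k) : PGConfig V k :=
  ⟨(v, w, c) ::ₘ H.edges, Function.update H.pebs v ((H.pebs v).erase c)⟩

/-- The configuration resulting from a pebble-slide move along the edge `(v, w, c)`,
using a pebble of color `c'` on `w`: the edge `vw` is replaced by `wv`, the pebble of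
color `c` that was on the edge goes to `v`, and the pebble of color `c'` from `w` is
placed on the new edge `wv`. -/
def slideCfg (H : PGConfig V k) (v w : V) (c c' : Fin k) : PGConfig V k :=
  ⟨(w, v, c') ::ₘ H.edges.erase (v, w, c),
    Function.update (Function.update H.pebs w ((H.pebs w).erase c')) v
      (c ::ₘ Function.update H.pebs w ((H.pebs w).erase c') v)⟩

/-- A legal move of the `(k,ℓ)`-pebble game with colors. -/
inductive Step (k ℓ : ℕ) : PGConfig V k → PGConfig V k → Prop
  | add (H : PGConfig V k) (v w : V) (c : Fin k)
      (hpeb : ℓ + 1 ≤ ∑ u ∈ ({v, w} : Finset V), (H.pebs u).card)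
      (hc : c ∈ H.pebs v) :
      Step k ℓ H (addEdgeCfg H v w c)
  | slide (H : PGConfig V k) (v w : V) (c c' : Fin k)
      (he : (v, w, c) ∈ H.edges)
      (hc : c' ∈ H.pebs w) :
      Step k ℓ H (slideCfg H v w c c')

/-- The initial configuration: no edges, and one pebble of each of the `k` colors on
every vertex. -/
def initCfg (V : Type) [DecidableEq V] [Fintype V] (k : ℕ) : PGConfig V k :=
  ⟨0, fun _ => Finset.univ.val⟩

/-- A configuration is reachable if it arises from the initial configuration by a
finite sequence of legal moves. -/
def Reachable [Fintype V] (k ℓ : ℕ) (H : PGConfig V k) : Prop :=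
  Relation.ReflTransGen (Step k ℓ) (initCfg V k) H

/-- The underlying undirected multigraph (multiset of edges) of a configuration. -/
def undirected (H : PGConfig V k) : Multiset (Sym2 V) :=
  H.edges.map fun e => s(e.1, e.2.1)

/-- The (undirected) edges of a configuration carrying a pebble of color `c`. -/
def monoEdges (H : PGConfig V k) (c : Fin k) : Multiset (Sym2 V) :=
  (H.edges.filter fun e => e.2.2 = c).map fun e => s(e.1, e.2.1)

/-- The undirected edges of color `c` among a multiset `F` of directed colored
edges. -/
def monoOf (F : Multiset (V × V × Fin k)) (c : Fin k) : Multiset (Sym2 V) :=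
  (F.filter fun e => e.2.2 = c).map fun e => s(e.1, e.2.1)

/-- `G` (a multiset of undirected edges on the fixed finite vertex set `V`) is a
`(k,ℓ)`-pebble-game graph if it is the underlying undirected multigraph of some
reachable configuration. -/
def PebbleGameGraph [Fintype V] (k ℓ : ℕ) (E : Multiset (Sym2 V)) : Prop :=
  ∃ H : PGConfig V k, Reachable k ℓ H ∧ undirected H = E

/-- The edges of `E` spanned by the vertex set `S` (both endpoints in `S`). -/
def spanned (E : Multiset (Sym2 V)) (S : Finset V) : Multiset (Sym2 V) :=
  E.filter fun e => e ∈ S.sym2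

/-- A multigraph is `(k,ℓ)`-sparse if every nonempty set of `n'` vertices spans at
most `k n' - ℓ` edges. -/
def Sparse (k ℓ : ℕ) (E : Multiset (Sym2 V)) : Prop :=
  ∀ S : Finset V, S.Nonempty → (spanned E S).card ≤ k * S.card - ℓ

/-- A multigraph is `(k,ℓ)`-tight if it is `(k,ℓ)`-sparse with exactly `k|V| - ℓ`
edges. -/
def Tight [Fintype V] (k ℓ : ℕ) (E : Multiset (Sym2 V)) : Prop :=
  Sparse k ℓ E ∧ E.card = k * Fintype.card V - ℓ

/-- Connectivity (as undirected multigraphs) via the edges of `F`. -/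
def Conn (F : Multiset (Sym2 V)) : V → V → Prop :=
  Relation.ReflTransGen fun a b => s(a, b) ∈ F

/-- The connected components of the graph with vertex set `S` and edge multiset `F`
(whose edges are assumed to be spanned by `S`), as a finset of vertex sets. -/
noncomputable def components (S : Finset V) (F : Multiset (Sym2 V)) : Finset (Finset V) :=
  S.image fun v => S.filter fun u => Conn F v u

/-- The tree-pieces of the graph `(S, F)`: connected components that contain no cycle,
i.e. whose spanned edge count is exactly one less than their vertex count (an isolated
vertex is a tree-piece). -/
noncomputable def treePieces (S : Finset V) (F : Multiset (Sym2 V)) : Finset (Finset V) :=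
  (components S F).filter fun C => (spanned F C).card + 1 = C.card

/-- The number of tree-pieces of the graph `(S, F)`. -/
noncomputable def treePieceCount (S : Finset V) (F : Multiset (Sym2 V)) : ℕ :=
  (treePieces S F).card

/-- A multigraph contains a cycle iff some nonempty vertex set spans at least as many
edges as it has vertices. -/
def HasCycle (F : Multiset (Sym2 V)) : Prop :=
  ∃ S : Finset V, S.Nonempty ∧ S.card ≤ (spanned F S).card

/-- A spanning tree on the whole (finite) vertex set: connected with `|V| - 1` edges. -/
def IsSpanningTree [Fintype V] (T : Multiset (Sym2 V)) : Prop :=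
  (∀ u v : V, Conn T u v) ∧ T.card + 1 = Fintype.card V

/-- A spanning map-graph: the edges admit an orientation in which every vertex has
out-degree exactly one. -/
def IsSpanningMapGraph [Fintype V] (T : Multiset (Sym2 V)) : Prop :=
  ∃ M : Multiset (V × V), M.map (fun p => s(p.1, p.2)) = T ∧
    ∀ v : V, (M.filter fun p => p.1 = v).card = 1

/-- A `(k,ℓ)`-maps-and-trees decomposition: `ℓ` edge-disjoint spanning trees and
`k - ℓ` edge-disjoint spanning map-graphs whose union is `E`. -/
def MapsAndTrees [Fintype V] (k ℓ : ℕ) (E : Multiset (Sym2 V)) : Prop :=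
  ∃ (T : Fin ℓ → Multiset (Sym2 V)) (M : Fin (k - ℓ) → Multiset (Sym2 V)),
    ((∑ i, T i) + ∑ j, M j) = E ∧ (∀ i, IsSpanningTree (T i)) ∧
      ∀ j, IsSpanningMapGraph (M j)

/-- `(S, T)` is a (possibly single-vertex) tree: nonempty vertex set `S`, edges spanned
by `S`, connected on `S`, and `|T| + 1 = |S|`. -/
def IsTreeOn (S : Finset V) (T : Multiset (Sym2 V)) : Prop :=
  S.Nonempty ∧ (∀ e ∈ T, e ∈ S.sym2) ∧ (∀ u ∈ S, ∀ v ∈ S, Conn T u v) ∧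
    T.card + 1 = S.card

/-- An `ℓTk` decomposition of `E`: `ℓ` edge-disjoint (not necessarily spanning,
possibly single-vertex) trees `(S i, T i)` whose edges partition `E`, such that every
vertex belongs to exactly `k` of the trees. -/
def LTkDecomp (k ℓ : ℕ) (E : Multiset (Sym2 V)) (S : Fin ℓ → Finset V)
    (T : Fin ℓ → Multiset (Sym2 V)) : Prop :=
  (∑ i, T i) = E ∧ (∀ i, IsTreeOn (S i) (T i)) ∧
    ∀ v : V, (Finset.univ.filter fun i => v ∈ S i).card = k

/-- A proper `ℓTk`: an `ℓTk` decomposition such that every nonempty subgraph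
(vertex set `U`, together with a sub-multiset `F i` of each tree spanned by `U`)
contains at least `ℓ` tree-pieces, the tree-pieces being the connected components of
the intersections of the trees with the subgraph. -/
def ProperLTk (k ℓ : ℕ) (E : Multiset (Sym2 V)) : Prop :=
  ∃ (S : Fin ℓ → Finset V) (T : Fin ℓ → Multiset (Sym2 V)),
    LTkDecomp k ℓ E S T ∧
      ∀ U : Finset V, U.Nonempty →
        ∀ F : Fin ℓ → Multiset (Sym2 V),
          (∀ i, F i ≤ T i) → (∀ i, ∀ e ∈ F i, e ∈ U.sym2) →
            ℓ ≤ ∑ i, treePieceCount (U ∩ S i) (F i)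

/-- One pebble-slide move (as a relation between configurations). -/
def SlideRel (k : ℕ) (A B : PGConfig V k) : Prop :=
  ∃ (v w : V) (c c' : Fin k), (v, w, c) ∈ A.edges ∧ c' ∈ A.pebs w ∧
    B = slideCfg A v w c c'

/-- A canonical move of the `(k,ℓ)`-pebble game with colors: add-edge moves cover the
new edge with a color present on both endpoints if one exists, and otherwise with the
highest-numbered color present; pebble-slide moves never create a monochromatic
cycle. -/
inductive CanStep (k ℓ : ℕ) : PGConfig V k → PGConfig V k → Prop
  | add (H : PGConfig V k) (v w : V) (c : Fin k)
      (hpeb : ℓ + 1 ≤ ∑ u ∈ ({v, w} : Finset V), (H.pebs u).card)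
      (hc : c ∈ H.pebs v)
      (hcanon : c ∈ H.pebs w ∨
        ((∀ c' : Fin k, c' ∈ H.pebs v → c' ∉ H.pebs w) ∧
          ∀ c' : Fin k, (c' ∈ H.pebs v ∨ c' ∈ H.pebs w) → c' ≤ c)) :
      CanStep k ℓ H (addEdgeCfg H v w c)
  | slide (H : PGConfig V k) (v w : V) (c c' : Fin k)
      (he : (v, w, c) ∈ H.edges)
      (hc : c' ∈ H.pebs w)
      (hnocycle : ∀ i : Fin k,
        HasCycle (monoEdges (slideCfg H v w c c') i) → HasCycle (monoEdges H i)) :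
      CanStep k ℓ H (slideCfg H v w c c')

/-- The graph obtained from a configuration by replacing every pebble lying on a
vertex by a loop at that vertex. -/
def withLoops [Fintype V] (H : PGConfig V k) : Multiset (Sym2 V) :=
  undirected H + Finset.univ.val.bind fun v => Multiset.replicate (H.pebs v).card s(v, v)

end PebbleGame
open PebbleGame

/-!
We argue in the `(k,ℓ)`-game for any `k ≤ ℓ ≤ 2k`. Every configuration reached by canonical
moves satisfies three invariants: for each vertex `u` and color `c`, `u` holds either a pebble
of color `c` or an out-edge of color `c`, but not both; no color class contains a cycle; and
every set `S` of at least two vertices carries at least `ℓ` pebbles and out-going edges together.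

Counting the edges whose tail lies in `S` turns the first invariant into
`spanned(S) + leaving(S) + pebbles(S) = |S|` for each color, and into the same identity with
`k |S|` for all colors at once. The third invariant then gives `(k,ℓ)`-sparsity. A monochromatic
component `C` has no edge of its color leaving it and, being a connected forest, spans
`|C| - 1` such edges, so it holds exactly one pebble of its color.

Slides preserve the third invariant exactly, and an add-edge move inside `S` uses up one of at
least `ℓ + 1` pebbles. Since `ℓ ≥ k`, the endpoints of a new edge share a pebble color, so a
canonical move gives the edge a color `c` still present on both endpoints; a vertex set
containing both then holds two pebbles of color `c` and, by the color-`c` identity, spans at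
most `|S| - 2` edges of that color, so the new edge closes no cycle.
-/

lemma Multiset.sum_card_filter_eq_card {α β : Type*} [Fintype β] [DecidableEq β]
    (g : α → β) (D : Multiset α) : ∑ b, (D.filter (g · = b)).card = D.card := by
  induction D using Multiset.induction with
  | empty => simp
  | cons a D ih =>
    simp [Multiset.filter_cons, Finset.sum_add_distrib, ih, apply_ite Multiset.card, add_comm]

namespace PebbleGame

variable {V : Type} [DecidableEq V]

section Multigraph

variable {F : Multiset (Sym2 V)}

lemma conn_iff_reachable {a b : V} :
    Conn F a b ↔ (SimpleGraph.fromEdgeSet {e | e ∈ F}).Reachable a b := by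
  rw [SimpleGraph.reachable_iff_reflTransGen, Conn]
  constructor
  · intro h
    induction h with
    | refl => rfl
    | @tail b c _ hbc ih =>
      by_cases hb : b = c
      · exact hb ▸ ih
      · exact ih.tail (by simpa [hb] using hbc)
  · exact fun h => Relation.ReflTransGen.mono (fun _ _ hxy => hxy.1) _ _ h

lemma card_le_card_spanned_add_one_of_mem_components [Fintype V] {C : Finset V}
    (hC : C ∈ components Finset.univ F) : C.card ≤ (spanned F C).card + 1 := by
  obtain ⟨v, -, rfl⟩ := Finset.mem_image.1 hC
  set C := Finset.univ.filter fun u => Conn F v u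
  set G := SimpleGraph.fromEdgeSet {e | e ∈ F}
  set K := G.connectedComponentMk v
  have hK : ∀ u, u ∈ K ↔ Conn F v u := fun u => by
    rw [conn_iff_reachable]
    exact SimpleGraph.ConnectedComponent.eq.trans ⟨fun h => h.symm, fun h => h.symm⟩
  have hcard : Nat.card K = C.card := by
    rw [Nat.card_congr (Equiv.subtypeEquivRight hK), Nat.card_eq_fintype_card,
      Fintype.card_subtype]
  have hedges : Nat.card K.toSimpleGraph.edgeSet ≤ (spanned F C).card := by
    refine (Nat.card_le_card_of_injective (β := (spanned F C).toFinset)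
      (fun e => ⟨Sym2.map Subtype.val e.1, ?_⟩) ?_).trans ?_
    · obtain ⟨e, he⟩ := e
      induction e with
      | h a b =>
        have hab : G.Adj a b := he
        simp only [G, SimpleGraph.fromEdgeSet_adj, Set.mem_ofPred_eq] at hab
        simp [C, spanned, hab.1, (hK a).1 a.2, (hK b).1 b.2]
    · intro e₁ e₂ h
      exact Subtype.ext (Sym2.map.injective Subtype.val_injective (congrArg Subtype.val h))
    · rw [Nat.card_eq_fintype_card, Fintype.card_coe]
      exact Multiset.toFinset_card_le _
  have := K.connected_toSimpleGraph.card_vert_le_card_edgeSet_add_one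
  omega

lemma hasCycle_cons {v w : V} (h : HasCycle (s(v, w) ::ₘ F)) :
    HasCycle F ∨ ∃ S : Finset V, v ∈ S ∧ w ∈ S ∧ S.card ≤ (spanned F S).card + 1 := by
  obtain ⟨S, hS, hle⟩ := h
  by_cases hvw : v ∈ S ∧ w ∈ S
  · exact .inr ⟨S, hvw.1, hvw.2, by simpa [spanned, Multiset.filter_cons, hvw] using hle⟩
  · exact .inl ⟨S, hS, by simpa [spanned, Multiset.filter_cons, hvw] using hle⟩

lemma spanned_singleton_eq_zero (hloop : ∀ e ∈ F, ¬e.IsDiag) (x : V) : spanned F {x} = 0 :=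
  Multiset.filter_eq_nil.2 fun e he hx => hloop e he <| by
    induction e with
    | h a b => simp_all

end Multigraph

section Directed

variable {α : Type*}

def outDeg (E : Multiset (V × V × α)) (u : V) : ℕ :=
  (E.filter fun e => e.1 = u).card

def numLeaving (E : Multiset (V × V × α)) (S : Finset V) : ℕ :=
  (E.filter fun e => e.1 ∈ S ∧ e.2.1 ∉ S).card

lemma card_spanned_add_numLeaving (E : Multiset (V × V × α)) (S : Finset V) :
    (spanned (E.map fun e => s(e.1, e.2.1)) S).card + numLeaving E S = ∑ u ∈ S, outDeg E u := by
  induction E using Multiset.induction with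
  | empty => simp [spanned, numLeaving, outDeg]
  | cons e E ih =>
    simp only [spanned, numLeaving, outDeg, Multiset.map_cons, Multiset.filter_cons] at ih ⊢
    simp only [Multiset.card_add, apply_ite Multiset.card, Multiset.card_singleton,
      Multiset.card_zero, Finset.sum_add_distrib, Finset.sum_ite_eq, Finset.mk_mem_sym2_iff]
    split_ifs <;> grind

lemma card_spanned_add_numLeaving_add_sum {E : Multiset (V × V × α)} {p : V → ℕ} {m : ℕ}
    (h : ∀ u, outDeg E u + p u = m) (S : Finset V) :
    (spanned (E.map fun e => s(e.1, e.2.1)) S).card + numLeaving E S + ∑ u ∈ S, p u =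
      m * S.card := by
  rw [card_spanned_add_numLeaving, ← Finset.sum_add_distrib, Finset.sum_congr rfl fun u _ => h u,
    Finset.sum_const, smul_eq_mul, mul_comm]

lemma sum_outDeg_filter_eq [Fintype α] [DecidableEq α] (E : Multiset (V × V × α)) (u : V) :
    ∑ a, outDeg (E.filter fun e => e.2.2 = a) u = outDeg E u :=
  calc ∑ a, outDeg (E.filter fun e => e.2.2 = a) u
      = ∑ a, ((E.filter fun e => e.1 = u).filter fun e => e.2.2 = a).card := by
        simp only [outDeg, Multiset.filter_filter, and_comm]
    _ = outDeg E u := Multiset.sum_card_filter_eq_card _ _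

lemma outDeg_filter_cons [DecidableEq α] (e : V × V × α) (E : Multiset (V × V × α)) (a : α)
    (u : V) :
    outDeg ((e ::ₘ E).filter fun e => e.2.2 = a) u =
      (if e.1 = u ∧ e.2.2 = a then 1 else 0) + outDeg (E.filter fun e => e.2.2 = a) u := by
  by_cases h₁ : e.1 = u <;> by_cases h₂ : e.2.2 = a <;> simp [outDeg, h₁, h₂, add_comm]

lemma numLeaving_cons (e : V × V × α) (E : Multiset (V × V × α)) (S : Finset V) :
    numLeaving (e ::ₘ E) S = (if e.1 ∈ S ∧ e.2.1 ∉ S then 1 else 0) + numLeaving E S := by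
  by_cases h : e.1 ∈ S ∧ e.2.1 ∉ S <;> simp [numLeaving, h, add_comm]

end Directed

section Moves

variable {k : ℕ} {H : PGConfig V k} {v w : V} {c c' : Fin k}

lemma addEdgeCfg_pebs (hc : c ∈ H.pebs v) (u : V) :
    (if u = v then {c} else 0) + (addEdgeCfg H v w c).pebs u = H.pebs u := by
  by_cases hu : u = v
  · subst hu; simp [addEdgeCfg, Multiset.cons_erase hc]
  · simp [addEdgeCfg, hu]

lemma slideCfg_pebs (hc' : c' ∈ H.pebs w) (u : V) :
    (if u = w then {c'} else 0) + (slideCfg H v w c c').pebs u =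
      (if u = v then {c} else 0) + H.pebs u := by
  by_cases hv : u = v <;> by_cases hw : u = w
  · subst hv hw; simp [slideCfg, Multiset.cons_erase hc']
  · subst hv; simp [slideCfg, hw]
  · subst hw; simp [slideCfg, hv, Multiset.cons_erase hc']
  · simp [slideCfg, hv, hw]

lemma slideCfg_edges (he : (v, w, c) ∈ H.edges) :
    (v, w, c) ::ₘ (slideCfg H v w c c').edges = (w, v, c') ::ₘ H.edges := by
  rw [slideCfg, Multiset.cons_swap, Multiset.cons_erase he]

lemma sum_card_ite_add {β : Type*} {f g : V → Multiset β} (S : Finset V) {a : V} {x : β}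
    (h : ∀ u, (if u = a then {x} else 0) + f u = g u) :
    (if a ∈ S then 1 else 0) + ∑ u ∈ S, (f u).card = ∑ u ∈ S, (g u).card := by
  simp only [← h, Multiset.card_add, apply_ite Multiset.card, Multiset.card_singleton,
    Multiset.card_zero, Finset.sum_add_distrib, Finset.sum_ite_eq']

end Moves

structure Invariant {k : ℕ} (ℓ : ℕ) (H : PGConfig V k) : Prop where
  outDeg_add_count : ∀ u c, outDeg (H.edges.filter fun e => e.2.2 = c) u + (H.pebs u).count c = 1
  acyclic : ∀ c, ¬HasCycle (monoEdges H c)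
  le_sum_card_add_numLeaving : ∀ S : Finset V, 2 ≤ S.card →
    ℓ ≤ ∑ u ∈ S, (H.pebs u).card + numLeaving H.edges S

namespace Invariant

variable {k ℓ : ℕ} {H : PGConfig V k}

lemma init [Fintype V] (hℓ : ℓ ≤ 2 * k) : Invariant ℓ (initCfg V k) where
  outDeg_add_count u c := by simp [initCfg, outDeg]
  acyclic c := fun ⟨S, hS, hle⟩ => by
    simp [monoEdges, spanned, initCfg] at hle
    exact hS.ne_empty hle
  le_sum_card_add_numLeaving S hS := by
    simp [initCfg, numLeaving]
    nlinarith

lemma nodup_pebs (hI : Invariant ℓ H) (u : V) : (H.pebs u).Nodup :=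
  Multiset.nodup_iff_count_le_one.2 fun c => by have := hI.outDeg_add_count u c; omega

lemma outDeg_add_card_pebs (hI : Invariant ℓ H) (u : V) :
    outDeg H.edges u + (H.pebs u).card = k := by
  have := Finset.sum_congr rfl fun c (_ : c ∈ Finset.univ) => hI.outDeg_add_count u c
  rwa [Finset.sum_add_distrib, sum_outDeg_filter_eq, Multiset.sum_count_eq_card
    fun _ _ => Finset.mem_univ _, Finset.sum_const, Finset.card_univ, Fintype.card_fin,
    smul_eq_mul, mul_one] at this

lemma card_pebs_le (hI : Invariant ℓ H) (u : V) : (H.pebs u).card ≤ k := by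
  have := hI.outDeg_add_card_pebs u
  omega

lemma card_spanned_monoEdges_add (hI : Invariant ℓ H) (c : Fin k) (S : Finset V) :
    (spanned (monoEdges H c) S).card + numLeaving (H.edges.filter fun e => e.2.2 = c) S +
      ∑ u ∈ S, (H.pebs u).count c = S.card := by
  have := card_spanned_add_numLeaving_add_sum (hI.outDeg_add_count · c) S
  rwa [one_mul] at this

lemma card_spanned_undirected_add_le (hI : Invariant ℓ H) {S : Finset V} (hS : 2 ≤ S.card) :
    (spanned (undirected H) S).card + ℓ ≤ k * S.card := by
  have := card_spanned_add_numLeaving_add_sum hI.outDeg_add_card_pebs S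
  have := hI.le_sum_card_add_numLeaving S hS
  simp only [undirected] at *
  omega

lemma sparse_of_le_undirected (hI : Invariant ℓ H) {F : Multiset (Sym2 V)}
    (hF : F ≤ undirected H) (hloop : ∀ e ∈ F, ¬e.IsDiag) : Sparse k ℓ F := by
  intro S hS
  obtain hS1 | hS2 := Nat.lt_or_ge S.card 2
  · have := hS.card_pos
    obtain ⟨x, rfl⟩ : ∃ x, S = {x} := Finset.card_eq_one.1 (by omega)
    simp [spanned_singleton_eq_zero hloop]
  · have := hI.card_spanned_undirected_add_le hS2
    have := Multiset.card_le_card (Multiset.filter_le_filter (· ∈ S.sym2) hF)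
    simp only [spanned] at *
    omega

lemma sum_count_eq_one_of_mem_components [Fintype V] (hI : Invariant ℓ H) {c : Fin k}
    {C : Finset V} (hC : C ∈ components Finset.univ (monoEdges H c)) :
    ∑ u ∈ C, (H.pebs u).count c = 1 := by
  have hconn := card_le_card_spanned_add_one_of_mem_components hC
  obtain ⟨v, -, rfl⟩ := Finset.mem_image.1 hC
  set C := Finset.univ.filter fun u => Conn (monoEdges H c) v u
  have hvC : v ∈ C := Finset.mem_filter.2 ⟨Finset.mem_univ _, .refl⟩
  have hclosed : numLeaving (H.edges.filter fun e => e.2.2 = c) C = 0 := by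
    refine Multiset.card_eq_zero.2 <|
      Multiset.filter_eq_nil.2 fun e he ⟨htail, hhead⟩ => hhead ?_
    simp only [C, Finset.mem_filter, Finset.mem_univ, true_and] at htail ⊢
    exact htail.tail (Multiset.mem_map_of_mem _ he)
  have hacyclic : (spanned (monoEdges H c) C).card < C.card :=
    not_le.1 fun h => hI.acyclic c ⟨C, ⟨v, hvC⟩, h⟩
  have := hI.card_spanned_monoEdges_add c C
  omega

lemma ne_and_mem_pebs_of_canonical (hI : Invariant ℓ H) (hkℓ : k ≤ ℓ) {v w : V} {c : Fin k}
    (hpeb : ℓ + 1 ≤ ∑ u ∈ ({v, w} : Finset V), (H.pebs u).card)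
    (hcanon : c ∈ H.pebs w ∨ ((∀ c' : Fin k, c' ∈ H.pebs v → c' ∉ H.pebs w) ∧
      ∀ c' : Fin k, (c' ∈ H.pebs v ∨ c' ∈ H.pebs w) → c' ≤ c)) :
    v ≠ w ∧ c ∈ H.pebs w := by
  have hvw : v ≠ w := by
    rintro rfl
    have := hI.card_pebs_le v
    rw [Finset.pair_eq_singleton, Finset.sum_singleton] at hpeb
    omega
  refine ⟨hvw, hcanon.resolve_right fun ⟨hdisj, _⟩ => ?_⟩
  -- pigeonhole: the two endpoints carry more than `k` pebbles, of pairwise distinct colors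
  have hcard : (Finset.univ : Finset (Fin k)).card <
      (H.pebs v).toFinset.card + (H.pebs w).toFinset.card := by
    rw [Finset.sum_pair hvw] at hpeb
    rw [Multiset.toFinset_card_of_nodup (hI.nodup_pebs v),
      Multiset.toFinset_card_of_nodup (hI.nodup_pebs w), Finset.card_univ, Fintype.card_fin]
    omega
  obtain ⟨c', hc'⟩ := Finset.inter_nonempty_of_card_lt_card_add_card
    (Finset.subset_univ _) (Finset.subset_univ _) hcard
  simp only [Finset.mem_inter, Multiset.mem_toFinset] at hc'
  exact hdisj c' hc'.1 hc'.2

lemma addEdge (hI : Invariant ℓ H) (hkℓ : k ≤ ℓ) {v w : V} {c : Fin k}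
    (hpeb : ℓ + 1 ≤ ∑ u ∈ ({v, w} : Finset V), (H.pebs u).card) (hc : c ∈ H.pebs v)
    (hcanon : c ∈ H.pebs w ∨ ((∀ c' : Fin k, c' ∈ H.pebs v → c' ∉ H.pebs w) ∧
      ∀ c' : Fin k, (c' ∈ H.pebs v ∨ c' ∈ H.pebs w) → c' ≤ c)) :
    Invariant ℓ (addEdgeCfg H v w c) := by
  obtain ⟨hvw, hcw⟩ := hI.ne_and_mem_pebs_of_canonical hkℓ hpeb hcanon
  have hpebs := addEdgeCfg_pebs (w := w) hc
  have hedges : (addEdgeCfg H v w c).edges = (v, w, c) ::ₘ H.edges := rfl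
  refine ⟨fun u i => ?_, fun i hcyc => ?_, fun S hS => ?_⟩
  · have h1 := congrArg (Multiset.count i) (hpebs u)
    have h2 := hI.outDeg_add_count u i
    rw [hedges, outDeg_filter_cons]
    simp only [Multiset.count_add, apply_ite (Multiset.count i), Multiset.count_singleton,
      Multiset.count_zero] at h1
    split_ifs at h1 ⊢ <;> grind
  · by_cases hi : c = i
    · subst hi
      have hmono : monoEdges (addEdgeCfg H v w c) c = s(v, w) ::ₘ monoEdges H c := by
        simp [monoEdges, hedges]
      rcases hasCycle_cons (hmono ▸ hcyc) with h | ⟨S, hvS, hwS, hle⟩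
      · exact hI.acyclic c h
      -- both endpoints still carry a pebble of color `c`, so `S` would hold two of them
      · have hid := hI.card_spanned_monoEdges_add c S
        have hsub : (H.pebs v).count c + (H.pebs w).count c ≤ ∑ u ∈ S, (H.pebs u).count c :=
          (Finset.sum_pair (f := fun u => (H.pebs u).count c) hvw).symm.le.trans
            (Finset.sum_le_sum_of_subset (Finset.insert_subset hvS (by simpa using hwS)))
        have := Multiset.count_pos.2 hc
        have := Multiset.count_pos.2 hcw
        omega
    · have hmono : monoEdges (addEdgeCfg H v w c) i = monoEdges H i := by
        simp [monoEdges, hedges, hi]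
      exact hI.acyclic i (hmono ▸ hcyc)
  · have h1 := sum_card_ite_add S hpebs
    have h2 := hI.le_sum_card_add_numLeaving S hS
    rw [hedges, numLeaving_cons]
    by_cases hvS : v ∈ S
    · by_cases hwS : w ∈ S
      · have := Finset.sum_le_sum_of_subset (f := fun u => (H.pebs u).card)
          (Finset.insert_subset hvS (Finset.singleton_subset_iff.2 hwS))
        simp only [hvS, hwS, if_true, not_true_eq_false, and_false, if_false] at h1 ⊢
        omega
      · simp only [hvS, hwS, if_true, not_false_eq_true, and_self] at h1 ⊢
        omega
    · simp only [hvS, if_false, false_and] at h1 ⊢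
      omega

lemma slide (hI : Invariant ℓ H) {v w : V} {c c' : Fin k} (he : (v, w, c) ∈ H.edges)
    (hc' : c' ∈ H.pebs w)
    (hnocycle : ∀ i : Fin k,
      HasCycle (monoEdges (slideCfg H v w c c') i) → HasCycle (monoEdges H i)) :
    Invariant ℓ (slideCfg H v w c c') := by
  have hpebs := slideCfg_pebs (v := v) (c := c) hc'
  have hedges := slideCfg_edges (c' := c') he
  refine ⟨fun u i => ?_, fun i hcyc => hI.acyclic i (hnocycle i hcyc), fun S hS => ?_⟩
  · have h1 := congrArg (Multiset.count i) (hpebs u)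
    have h2 := congrArg (fun E => outDeg (E.filter fun e => e.2.2 = i) u) hedges
    have h3 := hI.outDeg_add_count u i
    simp only [outDeg_filter_cons, Multiset.count_add, apply_ite (Multiset.count i),
      Multiset.count_singleton, Multiset.count_zero] at h1 h2
    split_ifs at h1 h2 <;> grind
  · have h1 := (sum_card_ite_add S hpebs).trans (sum_card_ite_add S fun _ => rfl).symm
    have h2 := congrArg (numLeaving · S) hedges
    have h3 := hI.le_sum_card_add_numLeaving S hS
    simp only [numLeaving_cons] at h2
    by_cases hvS : v ∈ S <;> by_cases hwS : w ∈ S <;> simp [hvS, hwS] at h1 h2 <;> omega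

lemma of_reflTransGen [Fintype V] (hkℓ : k ≤ ℓ) (hℓ : ℓ ≤ 2 * k)
    (hH : Relation.ReflTransGen (CanStep k ℓ) (initCfg V k) H) : Invariant ℓ H := by
  induction hH with
  | refl => exact init hℓ
  | tail _ hstep hI =>
    cases hstep with
    | add v w c hpeb hc hcanon => exact hI.addEdge hkℓ hpeb hc hcanon
    | slide v w c c' he hc hnocycle => exact hI.slide he hc hnocycle

end Invariant

lemma le_undirected_of_le_withLoops [Fintype V] {k : ℕ} {H : PGConfig V k}
    {F : Multiset (Sym2 V)} (hF : F ≤ withLoops H) (hloop : ∀ e ∈ F, ¬e.IsDiag) :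
    F ≤ undirected H := by
  have hloops : ((Finset.univ.val.bind fun v =>
      Multiset.replicate (H.pebs v).card s(v, v)).filter fun e => ¬e.IsDiag) = 0 :=
    Multiset.filter_eq_nil.2 fun e he => by
      obtain ⟨v, -, hv⟩ := Multiset.mem_bind.1 he
      simp [Multiset.eq_of_mem_replicate hv]
  calc F = F.filter fun e => ¬e.IsDiag := (Multiset.filter_eq_self.2 hloop).symm
    _ ≤ (withLoops H).filter fun e => ¬e.IsDiag := Multiset.filter_le_filter _ hF
    _ ≤ undirected H := by
      rw [withLoops, Multiset.filter_add, hloops, add_zero]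
      exact Multiset.filter_le _ _

end PebbleGame

/-- the pebble game with colors and slider-pinning: in the final
configuration of any canonical `(2,3)`-pebble-game construction, replacing each
pebble on a vertex by a loop of the same color at that vertex yields a graph in
which every subgraph containing no loops is `(2,3)`-sparse, each color class of
non-loop edges is a forest (has no cycle), and each maximal monochromatic tree
(connected component of a color class) contains exactly one loop of its color. -/
theorem canonical_pebbles_to_loops_slider {V : Type} [Fintype V] [DecidableEq V]
    (H : PGConfig V 2)
    (hH : Relation.ReflTransGen (CanStep 2 3) (initCfg V 2) H) :
    (∀ F : Multiset (Sym2 V), F ≤ withLoops H → (∀ e ∈ F, ¬e.IsDiag) →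
        Sparse 2 3 F) ∧
      (∀ c : Fin 2, ¬HasCycle (monoEdges H c)) ∧
      ∀ c : Fin 2, ∀ C ∈ components Finset.univ (monoEdges H c),
        ∑ u ∈ C, (H.pebs u).count c = 1 := by
  have hI := Invariant.of_reflTransGen (by norm_num) (by norm_num) hH
  exact ⟨fun F hF hloop => hI.sparse_of_le_undirected (le_undirected_of_le_withLoops hF hloop)
    hloop, hI.acyclic, fun c C hC => hI.sum_count_eq_one_of_mem_components hC⟩
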